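/- MSPA optimality for independent codewords (abstract greedy max-min theorem): Let P : V × V → ℝ≥0 be received powers on a finite node set V with source s and destination d. For a route (ordered sequence of distinct nodes) M = (m_1 = s, m_2, …, m_k = d), define its rate as min over t ∈ {2,…,k} of Σ_{i<t} P(m_i, m_t). The greedy route constructed by repeatedly appending a node a* maximizing Σ_{i ∈ current route} P(i, a*) over all remaining nodes (stopping when d is appended) achieves rate at least that of every route from s to d. -/

import Mathlib

/-!
Fix a greedy position `t ≥ 1` and let `u` be the first position of a competing route `r` whose
node is not among the greedy prefix `g 0, …, g (t-1)`: it exists because `r` ends at `d`, and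
`u ≥ 1` because `r` starts at `s = g 0`. All of `r 0, …, r (u-1)` lie in the greedy prefix, so
by nonnegativity of `P` the power `r u` receives along `r` is at most what it would receive from
the greedy prefix, which the greedy choice bounds by the power received by `g t`.
-/

/-- The supported rate of a route `m : Fin k → V` (with `2 ≤ k`): the minimum, over
non-source positions `t`, of the sum of received powers from all earlier positions. -/
noncomputable def supportedRate {V : Type*} (P : V → V → ℝ) (k : ℕ) (hk : 2 ≤ k)
    (m : Fin k → V) : ℝ :=
  Finset.inf' (Finset.univ.filter fun t : Fin k => 1 ≤ (t : ℕ))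
    ⟨⟨1, by omega⟩, by simp⟩
    (fun t => ∑ i ∈ Finset.univ.filter (fun i : Fin k => (i : ℕ) < (t : ℕ)), P (m i) (m t))

open Finset Function

section PrefixPower

variable {V : Type*} (P : V → V → ℝ)

noncomputable def prefixPower {k : ℕ} (m : Fin k → V) (t : Fin k) (v : V) : ℝ :=
  ∑ i ∈ univ.filter (fun i : Fin k => (i : ℕ) < (t : ℕ)), P (m i) v

lemma supportedRate_le_prefixPower {k : ℕ} (hk : 2 ≤ k) (m : Fin k → V) {t : Fin k}
    (ht : 1 ≤ (t : ℕ)) : supportedRate P k hk m ≤ prefixPower P m t (m t) :=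
  inf'_le _ (by simpa using ht)

lemma le_supportedRate {k : ℕ} (hk : 2 ≤ k) (m : Fin k → V) {c : ℝ}
    (h : ∀ t : Fin k, 1 ≤ (t : ℕ) → c ≤ prefixPower P m t (m t)) :
    c ≤ supportedRate P k hk m :=
  le_inf' _ _ fun t ht => h t (by simpa using ht)

lemma prefixPower_le_prefixPower (hP : ∀ i j, 0 ≤ P i j) {n k : ℕ} {r : Fin n → V}
    {g : Fin k → V} (hr : Injective r) {u : Fin n} {t : Fin k}
    (hsub : ∀ i < u, ∃ j < t, g j = r i) (v : V) :
    prefixPower P r u v ≤ prefixPower P g t v := by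
  classical
  calc prefixPower P r u v
      = ∑ x ∈ (univ.filter fun i : Fin n => (i : ℕ) < u).image r, P x v :=
        (sum_image (f := (P · v)) fun _ _ _ _ h => hr h).symm
    _ ≤ ∑ x ∈ (univ.filter fun j : Fin k => (j : ℕ) < t).image g, P x v := by
        refine sum_le_sum_of_subset_of_nonneg ?_ fun x _ _ => hP x v
        simp only [subset_iff, mem_image, mem_filter, mem_univ, true_and]
        rintro _ ⟨i, hi, rfl⟩
        exact hsub i hi
    _ ≤ prefixPower P g t v := sum_image_le_of_nonneg fun x _ => hP x v

end PrefixPower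

/-- MSPA optimality for independent codewords: any greedy route (each appended node
maximizes the sum of received power from the current partial route, stopping when `d`
is appended) achieves a supported rate at least that of every route from `s` to `d`. -/
theorem mspa_optimal {V : Type*}
    (P : V → V → ℝ) (hP : ∀ i j, 0 ≤ P i j) (s d : V)
    -- the greedy (MSPA) route g
    (k : ℕ) (hk : 2 ≤ k) (g : Fin k → V)
    (hg0 : g ⟨0, by omega⟩ = s)
    (hgmid : ∀ t : Fin k, (t : ℕ) < k - 1 → g t ≠ d)
    (hgreedy : ∀ t : Fin k, 1 ≤ (t : ℕ) → ∀ v : V,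
      (∀ i : Fin k, (i : ℕ) < (t : ℕ) → g i ≠ v) →
      ∑ i ∈ Finset.univ.filter (fun i : Fin k => (i : ℕ) < (t : ℕ)), P (g i) v ≤
      ∑ i ∈ Finset.univ.filter (fun i : Fin k => (i : ℕ) < (t : ℕ)), P (g i) (g t))
    -- an arbitrary route r
    (n : ℕ) (hn : 2 ≤ n) (r : Fin n → V) (hrinj : Function.Injective r)
    (hr0 : r ⟨0, by omega⟩ = s) (hrlast : r ⟨n - 1, by omega⟩ = d) :
    supportedRate P n hn r ≤ supportedRate P k hk g := by
  refine le_supportedRate P hk g fun t ht => ?_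
  set S : Set V := {v | ∃ j < t, g j = v}
  have hdS : r ⟨n - 1, by omega⟩ ∉ S := by
    rintro ⟨j, hj, hjd⟩
    exact hgmid j (by omega) (hjd.trans hrlast)
  obtain ⟨u, huS, hmin⟩ := wellFounded_lt.has_min {x | r x ∉ S} ⟨_, hdS⟩
  have hbefore : ∀ i < u, r i ∈ S := fun i hi => not_not.1 fun h => hmin i h hi
  have hu : 1 ≤ (u : ℕ) := by
    by_contra! hu0
    exact huS ⟨⟨0, by omega⟩, show 0 < (t : ℕ) by omega,
      by rw [hg0, ← hr0]; exact congrArg r (Fin.ext (by show 0 = (u : ℕ); omega))⟩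
  calc supportedRate P n hn r ≤ prefixPower P r u (r u) := supportedRate_le_prefixPower P hn r hu
    _ ≤ prefixPower P g t (r u) := prefixPower_le_prefixPower P hP hrinj hbefore (r u)
    _ ≤ prefixPower P g t (g t) := hgreedy t ht (r u) fun j hj h => huS ⟨j, hj, h⟩
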